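/- If Γ ⊢_{NWFĈ} A then Γ ⊢_{HWFĈ} A; that is, every formula derivable from Γ in the natural deduction system NWFĈ is derivable from Γ in the restricted Hilbert system WFĈ. -/

import Mathlib

/-- Formulas of subintuitionistic propositional logic. -/
inductive Fml : Type
  | atom : ℕ → Fml
  | bot  : Fml
  | and  : Fml → Fml → Fml
  | or   : Fml → Fml → Fml
  | imp  : Fml → Fml → Fml
deriving DecidableEq

/-- `A ↔ B` abbreviates `(A → B) ∧ (B → A)`. -/
def Fml.biimp (A B : Fml) : Fml := (A.imp B).and (B.imp A)

/-- The extra axiom schemes / rules among I, C, D, Ĉ, D̂, N, N₂. -/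
inductive ExtAx : Type
  | I | C | D | Chat | Dhat | N | N2
deriving DecidableEq

/-- Theorems of the Hilbert system WF extended with the schemes/rules in `E`
(derivations with no assumptions; all rules unrestricted here). -/
inductive HThm (E : Set ExtAx) : Fml → Prop
  | ax1 (A B : Fml)   : HThm E (A.imp (A.or B))
  | ax2 (A B : Fml)   : HThm E (B.imp (A.or B))
  | ax3 (A B : Fml)   : HThm E ((A.and B).imp A)
  | ax4 (A B : Fml)   : HThm E ((A.and B).imp B)
  | ax7 (A B C : Fml) : HThm E ((A.and (B.or C)).imp ((A.and B).or (A.and C)))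
  | ax8 (A : Fml)     : HThm E (A.imp A)
  | ax14 (A : Fml)    : HThm E (Fml.bot.imp A)
  | mp {A B : Fml}    : HThm E A → HThm E (A.imp B) → HThm E B
  | af {A : Fml} (B : Fml) : HThm E A → HThm E (B.imp A)
  | tr {A B C : Fml}  : HThm E (A.imp B) → HThm E (B.imp C) → HThm E (A.imp C)
  | rc {A B C : Fml}  : HThm E (A.imp B) → HThm E (A.imp C) → HThm E (A.imp (B.and C))
  | rd {A B C : Fml}  : HThm E (A.imp C) → HThm E (B.imp C) → HThm E ((A.or B).imp C)
  | conj {A B : Fml}  : HThm E A → HThm E B → HThm E (A.and B)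
  | re {A B C D : Fml} : HThm E (A.biimp B) → HThm E (C.biimp D) →
      HThm E ((A.imp C).biimp (B.imp D))
  | axI (A B C : Fml) : ExtAx.I ∈ E →
      HThm E (((A.imp B).and (B.imp C)).imp (A.imp C))
  | axC (A B C : Fml) : ExtAx.C ∈ E →
      HThm E (((A.imp B).and (A.imp C)).imp (A.imp (B.and C)))
  | axD (A B C : Fml) : ExtAx.D ∈ E →
      HThm E (((A.imp C).and (B.imp C)).imp ((A.or B).imp C))
  | axChat (A B C : Fml) : ExtAx.Chat ∈ E →
      HThm E ((A.imp (B.and C)).imp ((A.imp B).and (A.imp C)))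
  | axDhat (A B C : Fml) : ExtAx.Dhat ∈ E →
      HThm E (((A.or B).imp C).imp ((A.imp C).and (B.imp C)))
  | ruleN {A B C D : Fml} : ExtAx.N ∈ E →
      HThm E (A.imp (B.or C)) → HThm E (C.imp (A.or D)) →
      HThm E ((A.and D).imp B) → HThm E ((C.and B).imp D) →
      HThm E ((A.imp B).biimp (C.imp D))
  | ruleN2 {A B C D : Fml} : ExtAx.N2 ∈ E →
      HThm E (C.imp (A.or D)) → HThm E ((C.and B).imp D) →
      HThm E ((A.imp B).imp (C.imp D))

/-- Restricted derivability from assumptions in the Hilbert system WF + `E`: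
besides assumptions and theorems, only the conjunction rule is unrestricted, and
modus ponens may be used only when the major premise `A → B` is a theorem
(derived with no assumptions); all other rules are confined to theorems. -/
inductive HDer (E : Set ExtAx) (Γ : Set Fml) : Fml → Prop
  | hyp {A : Fml}  : A ∈ Γ → HDer E Γ A
  | thm {A : Fml}  : HThm E A → HDer E Γ A
  | conj {A B : Fml} : HDer E Γ A → HDer E Γ B → HDer E Γ (A.and B)
  | mp {A B : Fml} : HDer E Γ A → HThm E (A.imp B) → HDer E Γ B

/-- Tags for the optional implication-introduction rules of the natural
deduction systems. -/
inductive NRule : Type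
  | impI1 | impI2 | impN | impN2 | impChat | impDhat | impAnd | impOr | impTr
deriving DecidableEq

/-- Natural deduction derivations for the system with optional rules `R`.
`Deriv R Γ A` is a derivation of `A` all of whose open assumptions lie in `Γ`. -/
inductive Deriv (R : Set NRule) : Set Fml → Fml → Type
  | hyp (Γ : Set Fml) (A : Fml) : A ∈ Γ → Deriv R Γ A
  | andI {Γ : Set Fml} {A B : Fml} :
      Deriv R Γ A → Deriv R Γ B → Deriv R Γ (A.and B)
  | andE1 {Γ : Set Fml} {A B : Fml} :
      Deriv R Γ (A.and B) → Deriv R Γ A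
  | andE2 {Γ : Set Fml} {A B : Fml} :
      Deriv R Γ (A.and B) → Deriv R Γ B
  | orI1 {Γ : Set Fml} {A : Fml} (B : Fml) :
      Deriv R Γ A → Deriv R Γ (A.or B)
  | orI2 {Γ : Set Fml} (A : Fml) {B : Fml} :
      Deriv R Γ B → Deriv R Γ (A.or B)
  | orE {Γ : Set Fml} {A B C : Fml} :
      Deriv R Γ (A.or B) → Deriv R (insert A Γ) C → Deriv R (insert B Γ) C →
      Deriv R Γ C
  | botE {Γ : Set Fml} (A : Fml) :
      Deriv R Γ Fml.bot → Deriv R Γ A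
  | impI {Γ : Set Fml} {A B : Fml} :
      Deriv R {A} B → Deriv R Γ (A.imp B)
  | impE {Γ : Set Fml} {A B : Fml} :
      Deriv R Γ A → Deriv R (∅ : Set Fml) (A.imp B) → Deriv R Γ B
  | impI1 {Γ : Set Fml} {A B D : Fml} :
      NRule.impI1 ∈ R → Deriv R {B} D → Deriv R {D} B →
      Deriv R Γ ((A.imp B).imp (A.imp D))
  | impI2 {Γ : Set Fml} {A B D : Fml} :
      NRule.impI2 ∈ R → Deriv R {B} D → Deriv R {D} B →
      Deriv R Γ ((B.imp A).imp (D.imp A))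
  | impIN {Γ : Set Fml} {A B C D : Fml} :
      NRule.impN ∈ R →
      Deriv R {A} (C.or B) → Deriv R {D} B → Deriv R {C} (A.or D) → Deriv R {B} D →
      Deriv R Γ ((A.imp B).imp (C.imp D))
  | impIN2 {Γ : Set Fml} {A B C D : Fml} :
      NRule.impN2 ∈ R →
      Deriv R {C} (A.or D) → Deriv R {B} D →
      Deriv R Γ ((A.imp B).imp (C.imp D))
  | impIChat {Γ : Set Fml} {A B : Fml} (C : Fml) :
      NRule.impChat ∈ R → Deriv R {A} B →
      Deriv R Γ ((C.imp A).imp (C.imp B))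
  | impIDhat {Γ : Set Fml} {A B : Fml} (C : Fml) :
      NRule.impDhat ∈ R → Deriv R {A} B →
      Deriv R Γ ((B.imp C).imp (A.imp C))
  | impIAnd {Γ : Set Fml} {A B C : Fml} :
      NRule.impAnd ∈ R → Deriv R Γ (A.imp B) → Deriv R Γ (A.imp C) →
      Deriv R Γ (A.imp (B.and C))
  | impIOr {Γ : Set Fml} {A B C : Fml} :
      NRule.impOr ∈ R → Deriv R Γ (A.imp C) → Deriv R Γ (B.imp C) →
      Deriv R Γ ((A.or B).imp C)
  | impITr {Γ : Set Fml} {A B C : Fml} :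
      NRule.impTr ∈ R → Deriv R Γ (A.imp B) → Deriv R Γ (B.imp C) →
      Deriv R Γ (A.imp C)

/-- `Γ ⊢ A` in the natural deduction system with optional rules `R`. -/
def NDer (R : Set NRule) (Γ : Set Fml) (A : Fml) : Prop :=
  Nonempty (Deriv R Γ A)

/-- A derivation may serve as the major premise of an elimination rule in a
normal derivation: it is an assumption or ends with an elimination rule
different from ∨E (i.e. ∧E or →E). -/
def Deriv.MajorOK : ∀ {R : Set NRule} {Γ : Set Fml} {A : Fml}, Deriv R Γ A → Prop
  | _, _, _, .hyp _ _ _ => True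
  | _, _, _, .andE1 _   => True
  | _, _, _, .andE2 _   => True
  | _, _, _, .impE _ _  => True
  | _, _, _, _          => False

/-- A derivation is normal if every major premise of an elimination rule is
either an assumption or the conclusion of an elimination rule different
from ∨E. -/
def Deriv.Normal {R : Set NRule} : ∀ {Γ : Set Fml} {A : Fml}, Deriv R Γ A → Prop
  | _, _, .hyp _ _ _ => True
  | _, _, .andI d e => d.Normal ∧ e.Normal
  | _, _, .andE1 d => d.MajorOK ∧ d.Normal
  | _, _, .andE2 d => d.MajorOK ∧ d.Normal
  | _, _, .orI1 _ d => d.Normal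
  | _, _, .orI2 _ d => d.Normal
  | _, _, .orE d e f => d.MajorOK ∧ d.Normal ∧ e.Normal ∧ f.Normal
  | _, _, .botE _ d => d.Normal
  | _, _, .impI d => d.Normal
  | _, _, .impE d e => e.MajorOK ∧ d.Normal ∧ e.Normal
  | _, _, .impI1 _ d e => d.Normal ∧ e.Normal
  | _, _, .impI2 _ d e => d.Normal ∧ e.Normal
  | _, _, .impIN _ d e f g => d.Normal ∧ e.Normal ∧ f.Normal ∧ g.Normal
  | _, _, .impIN2 _ d e => d.Normal ∧ e.Normal
  | _, _, .impIChat _ _ d => d.Normal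
  | _, _, .impIDhat _ _ d => d.Normal
  | _, _, .impIAnd _ d e => d.Normal ∧ e.Normal
  | _, _, .impIOr _ d e => d.Normal ∧ e.Normal
  | _, _, .impITr _ d e => d.Normal ∧ e.Normal

/-!
Induction on natural-deduction derivations. The only rules of `HDer` acting on assumptions
are conjunction and modus ponens with a theorem as major premise, so a derivation of `C` from
`insert A Γ` compresses into a conjunction `G` of formulas derivable from `Γ` together with a
theorem `A ∧ G → C`. With `Γ = ∅` this is the deduction theorem needed for `→I`, and with
distributivity it handles `∨E`. The rules `→I₁` and `→I₂` are instances of `RE`; for `→_Ĉ I`,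
a theorem `A → B` gives `A ↔ A ∧ B`, hence `(C → A) → (C → A ∧ B)` by `RE`, and `Ĉ` splits off
`C → B`.
-/

namespace HThm

variable {E : Set ExtAx}

lemma and_comm (A B : Fml) : HThm E ((A.and B).imp (B.and A)) :=
  .rc (.ax4 _ _) (.ax3 _ _)

lemma biimp_refl (A : Fml) : HThm E (A.biimp A) :=
  .conj (.ax8 A) (.ax8 A)

lemma and_imp_of_imp_right {A G G' C : Fml} (h : HThm E ((A.and G).imp C))
    (hG : HThm E (G'.imp G)) : HThm E ((A.and G').imp C) :=
  .tr (.rc (.ax3 _ _) (.tr (.ax4 _ _) hG)) h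

lemma and_or_imp {A B G C : Fml} (hA : HThm E ((A.and G).imp C))
    (hB : HThm E ((B.and G).imp C)) : HThm E ((G.and (A.or B)).imp C) :=
  .tr (.ax7 _ _ _) (.rd (.tr (and_comm _ _) hA) (.tr (and_comm _ _) hB))

lemma imp_right_of_biimp {B D : Fml} (A : Fml) (h : HThm E (B.biimp D)) :
    HThm E ((A.imp B).imp (A.imp D)) :=
  .mp (.re (biimp_refl A) h) (.ax3 _ _)

lemma imp_left_of_biimp {B D : Fml} (A : Fml) (h : HThm E (B.biimp D)) :
    HThm E ((B.imp A).imp (D.imp A)) :=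
  .mp (.re h (biimp_refl A)) (.ax3 _ _)

lemma imp_right_of_imp (hE : ExtAx.Chat ∈ E) {A B : Fml} (C : Fml) (h : HThm E (A.imp B)) :
    HThm E ((C.imp A).imp (C.imp B)) :=
  have hA : HThm E (A.biimp (A.and B)) := .conj (.rc (.ax8 _) h) (.ax3 _ _)
  .tr (imp_right_of_biimp C hA) (.tr (.axChat C A B hE) (.ax4 _ _))

end HThm

namespace HDer

variable {E : Set ExtAx}

lemma hThm_of_empty {A : Fml} (h : HDer E ∅ A) : HThm E A := by
  induction h with
  | hyp hA => exact absurd hA (Set.notMem_empty _)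
  | thm h => exact h
  | conj _ _ ih₁ ih₂ => exact .conj ih₁ ih₂
  | mp _ h ih => exact .mp ih h

lemma exists_of_insert {Γ : Set Fml} {A C : Fml} (h : HDer E (insert A Γ) C) :
    ∃ G, HDer E Γ G ∧ HThm E ((A.and G).imp C) := by
  induction h with
  | hyp hC =>
    rcases hC with rfl | hC
    · exact ⟨Fml.bot.imp Fml.bot, .thm (.ax8 _), .ax3 _ _⟩
    · exact ⟨_, .hyp hC, .ax4 _ _⟩
  | thm h => exact ⟨Fml.bot.imp Fml.bot, .thm (.ax8 _), .af _ h⟩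
  | conj _ _ ih₁ ih₂ =>
    obtain ⟨G₁, hG₁, h₁⟩ := ih₁
    obtain ⟨G₂, hG₂, h₂⟩ := ih₂
    exact ⟨G₁.and G₂, .conj hG₁ hG₂,
      .rc (h₁.and_imp_of_imp_right (.ax3 _ _)) (h₂.and_imp_of_imp_right (.ax4 _ _))⟩
  | mp _ h ih =>
    obtain ⟨G, hG, hC⟩ := ih
    exact ⟨G, hG, .tr hC h⟩

lemma hThm_imp_of_singleton {A B : Fml} (h : HDer E {A} B) : HThm E (A.imp B) := by
  obtain ⟨G, hG, hB⟩ := exists_of_insert (Γ := ∅) (by simpa using h)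
  exact .tr (.rc (.ax8 _) (.af _ (hThm_of_empty hG))) hB

lemma or_elim {Γ : Set Fml} {A B C : Fml} (h : HDer E Γ (A.or B))
    (hA : HDer E (insert A Γ) C) (hB : HDer E (insert B Γ) C) : HDer E Γ C := by
  obtain ⟨G₁, hG₁, h₁⟩ := exists_of_insert hA
  obtain ⟨G₂, hG₂, h₂⟩ := exists_of_insert hB
  exact .mp (.conj (.conj hG₁ hG₂) h)
    (HThm.and_or_imp (h₁.and_imp_of_imp_right (.ax3 _ _)) (h₂.and_imp_of_imp_right (.ax4 _ _)))

theorem of_deriv {R : Set NRule} (hR : R ⊆ {NRule.impI1, NRule.impI2, NRule.impChat})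
    (hE : ExtAx.Chat ∈ E) {Γ : Set Fml} {A : Fml} (d : Deriv R Γ A) : HDer E Γ A := by
  induction d with
  | hyp _ _ hA => exact .hyp hA
  | andI _ _ ih₁ ih₂ => exact .conj ih₁ ih₂
  | andE1 _ ih => exact .mp ih (.ax3 _ _)
  | andE2 _ ih => exact .mp ih (.ax4 _ _)
  | orI1 _ _ ih => exact .mp ih (.ax1 _ _)
  | orI2 _ _ ih => exact .mp ih (.ax2 _ _)
  | orE _ _ _ ih ihA ihB => exact or_elim ih ihA ihB
  | botE _ _ ih => exact .mp ih (.ax14 _)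
  | impI _ ih => exact .thm (hThm_imp_of_singleton ih)
  | impE _ _ ih ihImp => exact .mp ih (hThm_of_empty ihImp)
  | impI1 _ _ _ ih₁ ih₂ =>
    exact .thm (.imp_right_of_biimp _
      (.conj (hThm_imp_of_singleton ih₁) (hThm_imp_of_singleton ih₂)))
  | impI2 _ _ _ ih₁ ih₂ =>
    exact .thm (.imp_left_of_biimp _
      (.conj (hThm_imp_of_singleton ih₁) (hThm_imp_of_singleton ih₂)))
  | impIChat C _ _ ih => exact .thm (.imp_right_of_imp hE C (hThm_imp_of_singleton ih))
  | impIN hm | impIN2 hm | impIDhat _ hm | impIAnd hm | impIOr hm | impITr hm =>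
    exact absurd (hR hm) (by simp)

end HDer

theorem natded_to_hilbert_WFChat (Γ : Set Fml) (A : Fml)
    (h : NDer {NRule.impI1, NRule.impI2, NRule.impChat} Γ A) :
    HDer ({ExtAx.Chat} : Set ExtAx) Γ A :=
  let ⟨d⟩ := h
  HDer.of_deriv subset_rfl (Set.mem_singleton _) d
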